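/- Let A be a finite dimensional k-algebra and α : A ⊗ A → A* a Hochschild 2-cocycle. Then the Hochschild extension T(A,α) is a symmetric algebra if and only if there exist c ∈ Z(A) ∩ U(A) and h ∈ A* such that α(a⊗b)(c) − α(b⊗a)(c) + h(ab − ba) = 0 for all a,b ∈ A. -/
import Mathlib


namespace HochschildExtension

variable (k : Type*) [Field k] (A : Type*) [Ring A] [Algebra k A]

/-- The underlying vector space `A ⊕ A*` of the Hochschild extension `T(A,α)`. -/
abbrev Ext : Type _ := A × Module.Dual k A

/-- The Hochschild 2-cocycle condition for `α : A ⊗ A → A*`, written pointwise using the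
dual bimodule structure `(c·f·a)(b) = f(abc)`, i.e. `(a·g)(x) = g(xa)`, `(f·b)(x) = f(bx)`. -/
def IsCocycle (α : A →ₗ[k] A →ₗ[k] Module.Dual k A) : Prop :=
  ∀ a b d x : A, α b d (x * a) - α (a * b) d x + α a (b * d) x - α a b (d * x) = 0

/-- The multiplication of the Hochschild extension `T(A,α)`:
`(a,f)(b,g) = (ab, a·g + f·b + α(a⊗b))`, where `(a·g)(x) = g(xa)` and `(f·b)(x) = f(bx)`. -/
noncomputable def hmul (α : A →ₗ[k] A →ₗ[k] Module.Dual k A) (p q : Ext k A) : Ext k A :=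
  (p.1 * q.1,
    q.2 ∘ₗ LinearMap.mulRight k p.1 + p.2 ∘ₗ LinearMap.mulLeft k q.1 + α p.1 q.1)

/-- The identity element `(1, -α(1⊗1))` of the Hochschild extension `T(A,α)`. -/
noncomputable def hone (α : A →ₗ[k] A →ₗ[k] Module.Dual k A) : Ext k A :=
  (1, -(α 1 1))

/-- `T(A,α)` is a symmetric algebra: there is a `k`-linear bijection
`φ : T(A,α) → T(A,α)*` which is a morphism of `T(A,α)`-bimodules, where `T(A,α)*`
carries the canonical bimodule structure `(t·ξ·s)(u) = ξ(sut)`. -/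
noncomputable def IsSymmetric (α : A →ₗ[k] A →ₗ[k] Module.Dual k A) : Prop :=
  ∃ φ : Ext k A ≃ₗ[k] Module.Dual k (Ext k A),
    ∀ x y u : Ext k A,
      φ (hmul k A α x y) u = φ x (hmul k A α y u) ∧
      φ (hmul k A α y x) u = φ x (hmul k A α u y)

variable (α : A →ₗ[k] A →ₗ[k] Module.Dual k A)

lemma hmul_assoc (hα : IsCocycle k A α) (p q r : Ext k A) :
    hmul k A α (hmul k A α p q) r = hmul k A α p (hmul k A α q r) := by
  obtain ⟨a, f⟩ := p; obtain ⟨b, g⟩ := q; obtain ⟨d, e⟩ := r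
  refine Prod.ext (mul_assoc a b d) ?_
  ext x
  have h := hα a b d x
  simp only [hmul, LinearMap.add_apply, LinearMap.coe_comp, Function.comp_apply,
    LinearMap.mulRight_apply, LinearMap.mulLeft_apply, map_add, mul_assoc]
  linear_combination -h

lemma hone_hmul (hα : IsCocycle k A α) (p : Ext k A) :
    hmul k A α (hone k A α) p = p := by
  obtain ⟨b, g⟩ := p
  refine Prod.ext (one_mul b) ?_
  ext x
  have h := hα 1 1 b x
  simp only [one_mul, mul_one] at h
  simp only [hmul, hone, LinearMap.add_apply, LinearMap.coe_comp, Function.comp_apply,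
    LinearMap.mulRight_apply, LinearMap.mulLeft_apply, LinearMap.neg_apply, mul_one, one_mul]
  linear_combination h

lemma hmul_hone (hα : IsCocycle k A α) (p : Ext k A) :
    hmul k A α p (hone k A α) = p := by
  obtain ⟨a, f⟩ := p
  refine Prod.ext (mul_one a) ?_
  ext x
  have h := hα a 1 1 x
  simp only [one_mul, mul_one] at h
  simp only [hmul, hone, LinearMap.add_apply, LinearMap.coe_comp, Function.comp_apply,
    LinearMap.mulRight_apply, LinearMap.mulLeft_apply, LinearMap.neg_apply, mul_one, one_mul]
  linear_combination -h

lemma hmul_add_left (p p' q : Ext k A) :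
    hmul k A α (p + p') q = hmul k A α p q + hmul k A α p' q := by
  refine Prod.ext (by simp [hmul, add_mul]) ?_
  ext x
  simp [hmul, add_mul, mul_add, map_add]
  ring

lemma hmul_add_right (p q q' : Ext k A) :
    hmul k A α p (q + q') = hmul k A α p q + hmul k A α p q' := by
  refine Prod.ext (by simp [hmul, mul_add]) ?_
  ext x
  simp [hmul, add_mul, mul_add, map_add]
  ring

lemma hmul_smul_left (r : k) (p q : Ext k A) :
    hmul k A α (r • p) q = r • hmul k A α p q := by
  refine Prod.ext (by simp [hmul, smul_mul_assoc]) ?_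
  ext x
  simp [hmul, smul_mul_assoc, mul_smul_comm, map_smul, smul_add]

lemma hmul_smul_right (r : k) (p q : Ext k A) :
    hmul k A α p (r • q) = r • hmul k A α p q := by
  refine Prod.ext (by simp [hmul, mul_smul_comm]) ?_
  ext x
  simp [hmul, smul_mul_assoc, mul_smul_comm, map_smul, smul_add]


/-- The Hochschild extension `T(A,α)` is a symmetric algebra if and
only if there exist `c ∈ Z(A) ∩ U(A)` and `h ∈ A*` such that
`α(a⊗b)(c) − α(b⊗a)(c) + h(ab − ba) = 0` for all `a, b ∈ A`. -/
theorem symmetry_criterion_iff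
    (k : Type*) [Field k] (A : Type*) [Ring A] [Algebra k A] [FiniteDimensional k A]
    (α : A →ₗ[k] A →ₗ[k] Module.Dual k A) (hα : IsCocycle k A α) :
    IsSymmetric k A α ↔
      ∃ (c : A) (h : Module.Dual k A), (∀ b : A, b * c = c * b) ∧ IsUnit c ∧
        (∀ a b : A, α a b c - α b a c + h (a * b - b * a) = 0) := by
  constructor
  · intro hsym
    obtain ⟨φ, hφ⟩ : ∃ φ : Ext k A ≃ₗ[k] Module.Dual k (Ext k A),
        ∀ x y u : Ext k A,
          φ (hmul k A α x y) u = φ x (hmul k A α y u) ∧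
          φ (hmul k A α y x) u = φ x (hmul k A α u y) := hsym
    set lam : Module.Dual k (Ext k A) := φ (hone k A α) with hlam
    have key : ∀ y u : Ext k A, φ y u = lam (hmul k A α y u) := by
      intro y u
      have := (hφ (hone k A α) y u).1
      rwa [hone_hmul k A α hα] at this
    have key2 : ∀ y u : Ext k A, φ y u = lam (hmul k A α u y) := by
      intro y u
      have := (hφ (hone k A α) y u).2
      rwa [hmul_hone k A α hα] at this
    have hsymm : ∀ y u : Ext k A, lam (hmul k A α y u) = lam (hmul k A α u y) := by
      intro y u; rw [← key, ← key2]
    set c : A := (Module.evalEquiv k A).symm (lam ∘ₗ LinearMap.inr k A (Module.Dual k A))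
      with hcdef
    have hcval : ∀ g : Module.Dual k A, g c = lam ((0 : A), g) := by
      intro g
      rw [hcdef]
      simpa using Module.apply_evalEquiv_symm_apply g (lam ∘ₗ LinearMap.inr k A (Module.Dual k A))
    set h : Module.Dual k A := lam ∘ₗ LinearMap.inl k A (Module.Dual k A) with hhdef
    have hhval : ∀ b : A, h b = lam ((b : A), (0 : Module.Dual k A)) := fun b => rfl
    have comp : ∀ (a b : A) (f g : Module.Dual k A),
        lam (hmul k A α (a, f) (b, g)) = h (a * b) + (g (c * a) + f (b * c) + α a b c) := by
      intro a b f g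
      have hsplit : hmul k A α (a, f) (b, g)
          = ((a * b, 0) : Ext k A)
            + ((0 : A), g ∘ₗ LinearMap.mulRight k a + f ∘ₗ LinearMap.mulLeft k b + α a b) := by
        simp [hmul, Prod.ext_iff]
      rw [hsplit, map_add, ← hhval, ← hcval]
      simp
    have hcomm : ∀ b : A, b * c = c * b := by
      intro b
      have hg : ∀ g : Module.Dual k A, g (c * b - b * c) = 0 := by
        intro g
        have := hsymm ((b : A), (0 : Module.Dual k A)) ((0 : A), g)
        rw [comp, comp] at this
        simp only [mul_zero, zero_mul, map_zero, LinearMap.zero_apply] at this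
        simp [map_sub]
        linear_combination this
      have := (Module.forall_dual_apply_eq_zero_iff k (c * b - b * c)).mp hg
      rw [sub_eq_zero] at this
      exact this.symm
    have hcocy : ∀ a b : A, α a b c - α b a c + h (a * b - b * a) = 0 := by
      intro a b
      have := hsymm ((a : A), (0 : Module.Dual k A)) ((b : A), (0 : Module.Dual k A))
      rw [comp, comp] at this
      simp only [map_zero, LinearMap.zero_apply, mul_zero, zero_mul] at this
      rw [map_sub]
      linear_combination this
    have hsurj : Function.Surjective (LinearMap.mulRight k c) := by
      rw [← LinearMap.dualMap_injective_iff]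
      rw [injective_iff_map_eq_zero]
      intro f hf
      have hf' : ∀ b : A, f (b * c) = 0 := by
        intro b
        have := DFunLike.congr_fun hf b
        simpa using this
      have hzero : φ ((0 : A), f) = 0 := by
        apply LinearMap.ext
        rintro ⟨b, g⟩
        rw [key, comp]
        simp [hf' b]
      have := φ.injective (hzero.trans (map_zero φ).symm)
      simpa using congrArg Prod.snd this
    obtain ⟨d, hd⟩ := hsurj 1
    simp only [LinearMap.mulRight_apply] at hd
    have hinj : Function.Injective (LinearMap.mulRight k c) :=
      (LinearMap.injective_iff_surjective).mpr hsurj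
    have hcd : c * d = 1 := by
      apply hinj
      simp only [LinearMap.mulRight_apply]
      rw [mul_assoc, hd, mul_one, one_mul]
    exact ⟨c, h, hcomm, ⟨⟨c, d, hcd, hd⟩, rfl⟩, hcocy⟩
  · rintro ⟨c, h, hcomm, hcunit, hcond⟩
    set lam : Module.Dual k (Ext k A) :=
      h ∘ₗ LinearMap.fst k A (Module.Dual k A)
        + (Module.Dual.eval k A c) ∘ₗ LinearMap.snd k A (Module.Dual k A) with hlam
    have lamval : ∀ (a : A) (f : Module.Dual k A), lam (a, f) = h a + f c := by
      intro a f; simp [hlam]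
    have comp : ∀ (a b : A) (f g : Module.Dual k A),
        lam (hmul k A α (a, f) (b, g)) = h (a * b) + (g (c * a) + f (b * c) + α a b c) := by
      intro a b f g
      rw [show hmul k A α (a, f) (b, g)
          = ((a * b : A), g ∘ₗ LinearMap.mulRight k a + f ∘ₗ LinearMap.mulLeft k b + α a b)
          from rfl, lamval]
      simp
    have hsymm : ∀ p q : Ext k A, lam (hmul k A α p q) = lam (hmul k A α q p) := by
      rintro ⟨a, f⟩ ⟨b, g⟩
      rw [comp, comp]
      have h1 := hcond a b
      rw [map_sub] at h1
      rw [hcomm a, hcomm b]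
      linear_combination h1
    set B : Ext k A →ₗ[k] Module.Dual k (Ext k A) :=
      LinearMap.mk₂ k (fun p q : Ext k A => lam (hmul k A α p q))
        (fun p p' q => by
          change lam (hmul k A α (p + p') q) = lam (hmul k A α p q) + lam (hmul k A α p' q)
          rw [hmul_add_left, map_add])
        (fun r p q => by
          change lam (hmul k A α (r • p) q) = r • lam (hmul k A α p q)
          rw [hmul_smul_left, map_smul])
        (fun p q q' => by
          change lam (hmul k A α p (q + q')) = lam (hmul k A α p q) + lam (hmul k A α p q')
          rw [hmul_add_right, map_add])
        (fun r p q => by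
          change lam (hmul k A α p (r • q)) = r • lam (hmul k A α p q)
          rw [hmul_smul_right, map_smul]) with hB
    have Bval : ∀ p q : Ext k A, B p q = lam (hmul k A α p q) := fun p q => rfl
    have Binj : Function.Injective B := by
      rw [injective_iff_map_eq_zero]
      rintro ⟨a, f⟩ hp
      have ha : ∀ g : Module.Dual k A, g (c * a) = 0 := by
        intro g
        have := DFunLike.congr_fun hp ((0 : A), g)
        rw [Bval, comp] at this
        simpa using this
      have ha' : c * a = 0 := (Module.forall_dual_apply_eq_zero_iff k (c * a)).mp ha
      have ha0 : a = 0 := by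
        have := congrArg (fun y => (↑hcunit.unit⁻¹ : A) * y) ha'
        simpa [← mul_assoc, IsUnit.val_inv_mul] using this
      have hf0 : f = 0 := by
        ext b
        have := DFunLike.congr_fun hp ((b * (↑hcunit.unit⁻¹ : A) : A), 0)
        rw [Bval, comp] at this
        simp only [ha0, map_zero, LinearMap.zero_apply, zero_mul, mul_zero, zero_add,
          add_zero] at this
        rwa [mul_assoc, IsUnit.val_inv_mul, mul_one] at this
      rw [ha0, hf0]
      exact Prod.mk_zero_zero
    have hfr : Module.finrank k (Ext k A) = Module.finrank k (Module.Dual k (Ext k A)) :=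
      (Subspace.dual_finrank_eq).symm
    refine ⟨LinearMap.linearEquivOfInjective B Binj hfr, ?_⟩
    intro x y u
    simp only [LinearMap.linearEquivOfInjective_apply, Bval]
    constructor
    · rw [hmul_assoc k A α hα]
    · rw [hmul_assoc k A α hα, hsymm y (hmul k A α x u), hmul_assoc k A α hα]

end HochschildExtension
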